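/- For every natural number n, the Cordonnier (Padovan) number P_n equals α^{n+4}/((α-β)(α-γ)) + β^{n+4}/((β-α)(β-γ)) + γ^{n+4}/((γ-α)(γ-β)), where α, β, γ are the distinct complex roots of x^3 - x - 1 = 0. -/
import Mathlib
set_option maxHeartbeats 1000000


/-- The Cordonnier (Padovan) sequence: P 0 = P 1 = P 2 = 1, P (n+3) = P (n+1) + P n. -/
def cordonnier : ℕ → ℤ
  | 0 => 1
  | 1 => 1
  | 2 => 1
  | (n + 3) => cordonnier (n + 1) + cordonnier n

theorem cordonnier_binet (α β γ : ℂ)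
    (hα : α ^ 3 - α - 1 = 0) (hβ : β ^ 3 - β - 1 = 0) (hγ : γ ^ 3 - γ - 1 = 0)
    (hαβ : α ≠ β) (hαγ : α ≠ γ) (hβγ : β ≠ γ) (n : ℕ) :
    (cordonnier n : ℂ) =
      α ^ (n + 4) / ((α - β) * (α - γ)) + β ^ (n + 4) / ((β - α) * (β - γ)) +
        γ ^ (n + 4) / ((γ - α) * (γ - β)) := by
  have dαβ : α - β ≠ 0 := sub_ne_zero.mpr hαβ
  have dαγ : α - γ ≠ 0 := sub_ne_zero.mpr hαγ
  have dβγ : β - γ ≠ 0 := sub_ne_zero.mpr hβγ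
  have dβα : β - α ≠ 0 := sub_ne_zero.mpr hαβ.symm
  have dγα : γ - α ≠ 0 := sub_ne_zero.mpr hαγ.symm
  have dγβ : γ - β ≠ 0 := sub_ne_zero.mpr hβγ.symm
  have S0 : 1 / ((α - β) * (α - γ)) + 1 / ((β - α) * (β - γ)) + 1 / ((γ - α) * (γ - β)) = 0 := by
    field_simp
    ring
  have S1 : α / ((α - β) * (α - γ)) + β / ((β - α) * (β - γ)) + γ / ((γ - α) * (γ - β)) = 0 := by
    field_simp
    ring
  have S2 : α ^ 2 / ((α - β) * (α - γ)) + β ^ 2 / ((β - α) * (β - γ))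
      + γ ^ 2 / ((γ - α) * (γ - β)) = 1 := by
    field_simp
    ring
  induction n using cordonnier.induct with
  | case1 =>
      show ((1 : ℤ) : ℂ) = _
      push_cast
      linear_combination -S2 - S1 - (α / ((α - β) * (α - γ))) * hα
        - (β / ((β - α) * (β - γ))) * hβ - (γ / ((γ - α) * (γ - β))) * hγ
  | case2 =>
      show ((1 : ℤ) : ℂ) = _
      push_cast
      linear_combination -S2 - S1 - S0 - ((α ^ 2 + 1) / ((α - β) * (α - γ))) * hα
        - ((β ^ 2 + 1) / ((β - α) * (β - γ))) * hβ
        - ((γ ^ 2 + 1) / ((γ - α) * (γ - β))) * hγ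
  | case3 =>
      show ((1 : ℤ) : ℂ) = _
      push_cast
      linear_combination -S2 - 2 * S1 - S0 - ((α ^ 3 + α + 1) / ((α - β) * (α - γ))) * hα
        - ((β ^ 3 + β + 1) / ((β - α) * (β - γ))) * hβ
        - ((γ ^ 3 + γ + 1) / ((γ - α) * (γ - β))) * hγ
  | case4 n ih1 ih2 =>
      rw [cordonnier]
      simp only [Nat.succ_eq_add_one]
      push_cast
      rw [ih1, ih2]
      linear_combination -(α ^ (n + 4) / ((α - β) * (α - γ))) * hα
        - (β ^ (n + 4) / ((β - α) * (β - γ))) * hβ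
        - (γ ^ (n + 4) / ((γ - α) * (γ - β))) * hγ
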